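/- (Lemma 3.4, fundamental inequality.) Let (d*, z*) be a fixed point of the NIDS iteration with d* ∈ range(I − W), let x* be a minimizer over ℝ^{n×p} of x ↦ r(x) + ½‖x − z*‖²_{Λ⁻¹}, and let (d^{k+1}, z^{k+1}) be obtained from (d^k, z^k) by one NIDS iteration with intermediate point x^k, where d^k ∈ range(I − W). Then ‖z^{k+1} − z*‖²_{Λ⁻¹} + ‖d^{k+1} − d*‖²_M ≤ ‖z^k − z*‖²_{Λ⁻¹} + ‖d^k − d*‖²_M − ‖z^k − z^{k+1}‖²_{Λ⁻¹} − ‖d^k − d^{k+1}‖²_M + 2⟨∇s(x^k) − ∇s(x*), z^k − z^{k+1}⟩ − 2⟨x^k − x*, ∇s(x^k) − ∇s(x*)⟩. -/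

import Mathlib

open Matrix Filter Topology

noncomputable section

/-- Trace inner product `⟨x, y⟩ = tr(xᵀ y)` on `n × p` real matrices. -/
def iprod {n p : ℕ} (x y : Matrix (Fin n) (Fin p) ℝ) : ℝ := (xᵀ * y).trace

/-- Weighted inner product `⟨x, y⟩_Q = tr(xᵀ Q y)`. -/
def iprodQ {n p : ℕ} (Q : Matrix (Fin n) (Fin n) ℝ) (x y : Matrix (Fin n) (Fin p) ℝ) : ℝ :=
  (xᵀ * Q * y).trace

/-- Weighted squared (semi)norm `‖x‖_Q² = tr(xᵀ Q x)`. -/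
def nsq {n p : ℕ} (Q : Matrix (Fin n) (Fin n) ℝ) (x : Matrix (Fin n) (Fin p) ℝ) : ℝ :=
  iprodQ Q x x

/-- `∇s(x)`: the matrix whose `i`-th row is the gradient field `g i` applied to the `i`-th
row of `x`. -/
def gradS {n p : ℕ} (g : Fin n → EuclideanSpace ℝ (Fin p) → EuclideanSpace ℝ (Fin p))
    (x : Matrix (Fin n) (Fin p) ℝ) : Matrix (Fin n) (Fin p) ℝ :=
  Matrix.of fun i => WithLp.equiv 2 (Fin p → ℝ) (g i ((WithLp.equiv 2 (Fin p → ℝ)).symm (x i)))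

/-- `x ∈ range(A)`, i.e. `x = A y` for some `y ∈ ℝ^{n×p}`. -/
def InRange {n p : ℕ} (A : Matrix (Fin n) (Fin n) ℝ) (x : Matrix (Fin n) (Fin p) ℝ) : Prop :=
  ∃ y : Matrix (Fin n) (Fin p) ℝ, x = A * y

/-- `B` is the Moore–Penrose pseudoinverse of `A`. -/
def IsMoorePenrose {n : ℕ} (A B : Matrix (Fin n) (Fin n) ℝ) : Prop :=
  A * B * A = A ∧ B * A * B = B ∧ (A * B)ᵀ = A * B ∧ (B * A)ᵀ = B * A

/-- `r(x) = Σᵢ rᵢ(xᵢ)` where `xᵢ` is the `i`-th row of `x`. -/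
def rsum {n p : ℕ} (r : Fin n → (Fin p → ℝ) → ℝ) (x : Matrix (Fin n) (Fin p) ℝ) : ℝ :=
  ∑ i, r i (x i)

/-- `q ∈ ∂r(x)`: subgradient of `rsum r` at `x` w.r.t. the trace inner product. -/
def IsSubgrad {n p : ℕ} (r : Fin n → (Fin p → ℝ) → ℝ) (x q : Matrix (Fin n) (Fin p) ℝ) : Prop :=
  ∀ y : Matrix (Fin n) (Fin p) ℝ, rsum r x + iprod q (y - x) ≤ rsum r y

/-- `t` is an eigenvalue of the real matrix `A`. -/
def IsEig {n : ℕ} (A : Matrix (Fin n) (Fin n) ℝ) (t : ℝ) : Prop :=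
  ∃ v : Fin n → ℝ, v ≠ 0 ∧ A *ᵥ v = t • v

/-- The mixing matrix assumption: symmetry, null space of `I - W` is the span of the
all-ones vector, and `2I ≽ W + I ≻ 0`. -/
def IsMixing {n : ℕ} (W : Matrix (Fin n) (Fin n) ℝ) : Prop :=
  Wᵀ = W ∧ (∀ v : Fin n → ℝ, (1 - W) *ᵥ v = 0 ↔ ∃ t : ℝ, v = fun _ => t) ∧
    (W + 1).PosDef ∧ ((2 : ℝ) • (1 : Matrix (Fin n) (Fin n) ℝ) - (W + 1)).PosSemidef

/-- `x` is a minimizer over `ℝ^{n×p}` of `u ↦ r(u) + ½‖u − z‖²_{Λ⁻¹}` where `Λ = diag α`. -/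
def ProxMin {n p : ℕ} (r : Fin n → (Fin p → ℝ) → ℝ) (α : Fin n → ℝ)
    (z x : Matrix (Fin n) (Fin p) ℝ) : Prop :=
  ∀ u : Matrix (Fin n) (Fin p) ℝ,
    rsum r x + 1 / 2 * nsq (Matrix.diagonal fun i => (α i)⁻¹) (x - z) ≤
      rsum r u + 1 / 2 * nsq (Matrix.diagonal fun i => (α i)⁻¹) (u - z)

/-- `(d, z)` is a fixed point of the NIDS iteration. -/
def NIDSFixed {n p : ℕ} (W : Matrix (Fin n) (Fin n) ℝ) (α : Fin n → ℝ) (c : ℝ)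
    (g : Fin n → EuclideanSpace ℝ (Fin p) → EuclideanSpace ℝ (Fin p))
    (r : Fin n → (Fin p → ℝ) → ℝ) (d z : Matrix (Fin n) (Fin p) ℝ) : Prop :=
  ∃ x : Matrix (Fin n) (Fin p) ℝ, ProxMin r α z x ∧
    d = d + c • ((1 - W) *
      ((2 : ℝ) • x - z - Matrix.diagonal α * gradS g x - Matrix.diagonal α * d)) ∧
    z = x - Matrix.diagonal α * gradS g x - Matrix.diagonal α * d

end


/-!
The prox step makes `Λ⁻¹(z − x)` a subgradient of `r` at `x`, so monotonicity of `∂r` gives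
`⟨Λ⁻¹((zᵏ − xᵏ) − (z* − x*)), xᵏ − x*⟩ ≥ 0`. Both differences of squared norms are expanded by the
three-point identity. The vectors `dᵏ⁺¹ − d*` and `dᵏ⁺¹ − dᵏ` lie in `range(I − W)`, where the
pseudoinverse inverts `I − W` (`⟨(I − W)a, B w⟩ = ⟨a, w⟩`); this turns the `M`-pairing into
`⟨dᵏ⁺¹ − d*, xᵏ − zᵏ + zᵏ⁺¹⟩`, and `(I − W)x* = 0` at the fixed point. Substituting the `z`-update,
what remains is exactly the monotonicity inequality.
-/

section TraceInner

variable {n p : ℕ}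

lemma iprod_comm (x y : Matrix (Fin n) (Fin p) ℝ) : iprod x y = iprod y x := by
  rw [iprod, ← trace_transpose, transpose_mul, transpose_transpose, iprod]

lemma iprod_add_left (x y z : Matrix (Fin n) (Fin p) ℝ) :
    iprod (x + y) z = iprod x z + iprod y z := by
  simp only [iprod, transpose_add, Matrix.add_mul, trace_add]

lemma iprod_sub_left (x y z : Matrix (Fin n) (Fin p) ℝ) :
    iprod (x - y) z = iprod x z - iprod y z := by
  simp only [iprod, transpose_sub, Matrix.sub_mul, trace_sub]

lemma iprod_add_right (x y z : Matrix (Fin n) (Fin p) ℝ) :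
    iprod x (y + z) = iprod x y + iprod x z := by
  simp only [iprod, Matrix.mul_add, trace_add]

lemma iprod_sub_right (x y z : Matrix (Fin n) (Fin p) ℝ) :
    iprod x (y - z) = iprod x y - iprod x z := by
  simp only [iprod, Matrix.mul_sub, trace_sub]

lemma iprod_smul_left (a : ℝ) (x y : Matrix (Fin n) (Fin p) ℝ) :
    iprod (a • x) y = a * iprod x y := by
  simp only [iprod, transpose_smul, Matrix.smul_mul, trace_smul, smul_eq_mul]

lemma iprod_smul_right (a : ℝ) (x y : Matrix (Fin n) (Fin p) ℝ) :
    iprod x (a • y) = a * iprod x y := by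
  simp only [iprod, Matrix.mul_smul, trace_smul, smul_eq_mul]

lemma iprod_neg_right (x y : Matrix (Fin n) (Fin p) ℝ) : iprod x (-y) = -iprod x y := by
  simp only [iprod, Matrix.mul_neg, trace_neg]

lemma iprod_mul_left (Q : Matrix (Fin n) (Fin n) ℝ) (x y : Matrix (Fin n) (Fin p) ℝ) :
    iprod (Q * x) y = iprod x (Qᵀ * y) := by
  rw [iprod, iprod, transpose_mul, Matrix.mul_assoc]

lemma iprod_mul_comm_of_transpose_eq {Q : Matrix (Fin n) (Fin n) ℝ} (hQ : Qᵀ = Q)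
    (x y : Matrix (Fin n) (Fin p) ℝ) : iprod x (Q * y) = iprod y (Q * x) := by
  rw [iprod_comm, iprod_mul_left, hQ]

lemma nsq_eq_iprod (Q : Matrix (Fin n) (Fin n) ℝ) (x : Matrix (Fin n) (Fin p) ℝ) :
    nsq Q x = iprod x (Q * x) := by
  rw [nsq, iprodQ, iprod, Matrix.mul_assoc]

lemma nsq_three_point (Q : Matrix (Fin n) (Fin n) ℝ) (u v w : Matrix (Fin n) (Fin p) ℝ) :
    nsq Q (u - w) - nsq Q (v - w) + nsq Q (v - u) =
      iprod (u - w) (Q * (u - v)) + iprod (u - v) (Q * (u - w)) := by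
  simp only [nsq_eq_iprod, Matrix.mul_sub, iprod_sub_left, iprod_sub_right]
  ring

lemma nsq_three_point_of_transpose_eq {Q : Matrix (Fin n) (Fin n) ℝ} (hQ : Qᵀ = Q)
    (u v w : Matrix (Fin n) (Fin p) ℝ) :
    nsq Q (u - w) - nsq Q (v - w) + nsq Q (v - u) = 2 * iprod (u - v) (Q * (u - w)) := by
  rw [nsq_three_point, iprod_mul_comm_of_transpose_eq hQ]
  ring

lemma nsq_add_smul {Q : Matrix (Fin n) (Fin n) ℝ} (hQ : Qᵀ = Q) (t : ℝ)
    (x y : Matrix (Fin n) (Fin p) ℝ) :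
    nsq Q (x + t • y) = nsq Q x + 2 * t * iprod y (Q * x) + t ^ 2 * nsq Q y := by
  simp only [nsq_eq_iprod, Matrix.mul_add, Matrix.mul_smul, iprod_add_left, iprod_add_right,
    iprod_smul_left, iprod_smul_right, iprod_mul_comm_of_transpose_eq hQ x y]
  ring

end TraceInner

section Prox

variable {n p : ℕ} {r : Fin n → (Fin p → ℝ) → ℝ}

lemma nonneg_of_forall_mem_Ioo_nonneg_add_mul {a b : ℝ}
    (h : ∀ t ∈ Set.Ioo (0 : ℝ) 1, 0 ≤ a + t * b) : 0 ≤ a := by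
  have hlim : Tendsto (fun t : ℝ => a + t * b) (𝓝[>] 0) (𝓝 a) := by
    have : Continuous fun t : ℝ => a + t * b := by fun_prop
    simpa using (this.tendsto 0).mono_left nhdsWithin_le_nhds
  exact ge_of_tendsto hlim (Filter.eventually_of_mem (Ioo_mem_nhdsGT one_pos) h)

lemma convexOn_rsum (hr : ∀ i, ConvexOn ℝ Set.univ (r i)) :
    ConvexOn ℝ Set.univ (rsum r) := by
  refine ⟨convex_univ, fun x _ y _ a b ha hb hab => ?_⟩
  simp only [rsum, smul_eq_mul, Finset.mul_sum, ← Finset.sum_add_distrib]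
  exact Finset.sum_le_sum fun i _ =>
    (hr i).2 (Set.mem_univ (x i)) (Set.mem_univ (y i)) ha hb hab

lemma ProxMin.isSubgrad {α : Fin n → ℝ} {z x : Matrix (Fin n) (Fin p) ℝ}
    (hr : ∀ i, ConvexOn ℝ Set.univ (r i)) (hx : ProxMin r α z x) :
    IsSubgrad r x ((Matrix.diagonal fun i => (α i)⁻¹) * (z - x)) := by
  set N : Matrix (Fin n) (Fin n) ℝ := Matrix.diagonal fun i => (α i)⁻¹
  have hN : Nᵀ = N := diagonal_transpose _
  intro u
  set K := rsum r u - rsum r x + iprod (u - x) (N * (x - z))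
  suffices 0 ≤ K by
    have : iprod (N * (z - x)) (u - x) = -iprod (u - x) (N * (x - z)) := by
      rw [iprod_comm, ← neg_sub x z, Matrix.mul_neg, iprod_neg_right]
    linarith
  refine nonneg_of_forall_mem_Ioo_nonneg_add_mul (b := nsq N (u - x) / 2) fun t ht => ?_
  have hmin := hx (x + t • (u - x))
  have hconv : rsum r (x + t • (u - x)) ≤ (1 - t) * rsum r x + t * rsum r u := by
    have hcomb : x + t • (u - x) = (1 - t) • x + t • u := by module
    simpa only [hcomb, smul_eq_mul] using (convexOn_rsum hr).2 (Set.mem_univ x)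
      (Set.mem_univ u) (sub_nonneg.2 ht.2.le) ht.1.le (sub_add_cancel 1 t)
  rw [add_sub_right_comm, nsq_add_smul hN] at hmin
  have : 0 ≤ t * (K + t * (nsq N (u - x) / 2)) := by nlinarith
  exact nonneg_of_mul_nonneg_right (by linarith) ht.1

lemma IsSubgrad.iprod_sub_nonneg {x y q q' : Matrix (Fin n) (Fin p) ℝ}
    (hq : IsSubgrad r x q) (hq' : IsSubgrad r y q') : 0 ≤ iprod (q - q') (x - y) := by
  have hxy := hq y
  have hyx := hq' x
  rw [← neg_sub x y, iprod_neg_right] at hxy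
  rw [iprod_sub_left]
  linarith

end Prox

section PseudoInverse

variable {n p : ℕ} {A B : Matrix (Fin n) (Fin n) ℝ}

lemma InRange.add {x y : Matrix (Fin n) (Fin p) ℝ} (hx : InRange A x) (hy : InRange A y) :
    InRange A (x + y) := by
  obtain ⟨a, rfl⟩ := hx
  obtain ⟨b, rfl⟩ := hy
  exact ⟨a + b, (Matrix.mul_add A a b).symm⟩

lemma InRange.sub {x y : Matrix (Fin n) (Fin p) ℝ} (hx : InRange A x) (hy : InRange A y) :
    InRange A (x - y) := by
  obtain ⟨a, rfl⟩ := hx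
  obtain ⟨b, rfl⟩ := hy
  exact ⟨a - b, (Matrix.mul_sub A a b).symm⟩

lemma iprod_mul_pinv_mul_of_inRange (hA : Aᵀ = A) (hABA : A * B * A = A)
    (a : Matrix (Fin n) (Fin p) ℝ) {w : Matrix (Fin n) (Fin p) ℝ} (hw : InRange A w) :
    iprod (A * a) (B * w) = iprod a w := by
  obtain ⟨b, rfl⟩ := hw
  rw [iprod_mul_left, hA, ← Matrix.mul_assoc, ← Matrix.mul_assoc, hABA]

lemma iprod_pinv_comm_of_inRange (hA : Aᵀ = A) (hABA : A * B * A = A)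
    {v w : Matrix (Fin n) (Fin p) ℝ} (hv : InRange A v) (hw : InRange A w) :
    iprod v (B * w) = iprod w (B * v) := by
  obtain ⟨a, rfl⟩ := hv
  obtain ⟨b, rfl⟩ := hw
  rw [iprod_mul_pinv_mul_of_inRange hA hABA a ⟨b, rfl⟩,
    iprod_mul_pinv_mul_of_inRange hA hABA b ⟨a, rfl⟩, iprod_mul_comm_of_transpose_eq hA]

end PseudoInverse

section NIDS

variable {n p : ℕ} {A B L N : Matrix (Fin n) (Fin n) ℝ} {c : ℝ}

lemma nsq_pinv_sub_three_point (hc : c ≠ 0) (hA : Aᵀ = A) (hABA : A * B * A = A)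
    (hL : Lᵀ = L) {d₁ d d' w : Matrix (Fin n) (Fin p) ℝ} (hd₁ : InRange A (d₁ - d'))
    (hstep : d₁ - d = c • (A * (w + L * (d₁ - d)))) :
    nsq (c⁻¹ • B - L) (d₁ - d') - nsq (c⁻¹ • B - L) (d - d') + nsq (c⁻¹ • B - L) (d - d₁) =
      2 * iprod (d₁ - d') w := by
  rw [nsq_three_point]
  set e := d₁ - d
  set Δ := d₁ - d'
  have he : InRange A e := ⟨c • (w + L * e), by rwa [Matrix.mul_smul]⟩
  have hBe : iprod e (B * Δ) = c * iprod (w + L * e) Δ := by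
    rw [hstep, iprod_smul_left, iprod_mul_pinv_mul_of_inRange hA hABA _ hd₁, ← hstep]
  have hBΔ : iprod Δ (B * e) = c * iprod (w + L * e) Δ := by
    rw [iprod_pinv_comm_of_inRange hA hABA hd₁ he, hBe]
  simp only [Matrix.sub_mul, Matrix.smul_mul, iprod_sub_right, iprod_smul_right, hBe, hBΔ,
    iprod_mul_comm_of_transpose_eq hL e Δ]
  rw [inv_mul_cancel_left₀ hc, iprod_add_left, iprod_comm w, iprod_comm (L * e)]
  ring

lemma mul_eq_zero_of_nids_fixedPoint (hc : c ≠ 0) {x' z' d' G' : Matrix (Fin n) (Fin p) ℝ}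
    (hd'fix : d' = d' + c • (A * ((2 : ℝ) • x' - z' - L * G' - L * d')))
    (hz'fix : z' = x' - L * G' - L * d') : A * x' = 0 := by
  have h := left_eq_add.mp hd'fix
  rwa [show (2 : ℝ) • x' - z' - L * G' - L * d' = x' by rw [hz'fix, two_smul]; abel,
    smul_eq_zero, or_iff_right hc] at h

theorem nsq_add_nsq_le_of_nids_step (hc : c ≠ 0) (hA : Aᵀ = A) (hABA : A * B * A = A)
    (hL : Lᵀ = L) (hN : Nᵀ = N) (hNL : N * L = 1)
    {x z d z₁ d₁ G x' z' d' G' : Matrix (Fin n) (Fin p) ℝ}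
    (hd₁ : d₁ = d + c • (A * ((2 : ℝ) • x - z - L * G - L * d)))
    (hz₁ : z₁ = x - L * G - L * d₁) (hd : InRange A d)
    (hd'fix : d' = d' + c • (A * ((2 : ℝ) • x' - z' - L * G' - L * d')))
    (hz'fix : z' = x' - L * G' - L * d') (hd' : InRange A d')
    (hmono : 0 ≤ iprod (N * (z - x) - N * (z' - x')) (x - x')) :
    nsq N (z₁ - z') + nsq (c⁻¹ • B - L) (d₁ - d') ≤
      nsq N (z - z') + nsq (c⁻¹ • B - L) (d - d') - nsq N (z - z₁) -
        nsq (c⁻¹ • B - L) (d - d₁) + 2 * iprod (G - G') (z - z₁) -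
        2 * iprod (x - x') (G - G') := by
  have hstep : d₁ - d = c • (A * ((x - z + z₁) + L * (d₁ - d))) := by
    rw [show x - z + z₁ + L * (d₁ - d) = (2 : ℝ) • x - z - L * G - L * d by
      rw [hz₁, Matrix.mul_sub, two_smul]; abel, hd₁]
    abel
  have hΔd : InRange A (d₁ - d') := by
    rw [hd₁]
    exact (hd.add ⟨_, (Matrix.mul_smul _ _ _).symm⟩).sub hd'
  have hdual := nsq_pinv_sub_three_point hc hA hABA hL hΔd hstep
  have hprimal := nsq_three_point_of_transpose_eq hN z₁ z z'
  have hNz : N * (z₁ - z') = N * (x - x') - (G - G') - (d₁ - d') := by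
    rw [hz₁, hz'fix]
    simp only [Matrix.mul_sub, ← Matrix.mul_assoc, hNL, Matrix.one_mul]
    abel
  have hx'orth : iprod (d₁ - d') x' = 0 := by
    obtain ⟨a, ha⟩ := hΔd
    rw [ha, iprod_mul_left, hA, mul_eq_zero_of_nids_fixedPoint hc hd'fix hz'fix, iprod,
      Matrix.mul_zero, trace_zero]
  have hres : N * (z₁ - z) + (d₁ - d') + (G - G') = -(N * (z - x) - N * (z' - x')) := by
    rw [add_assoc, show (d₁ - d') + (G - G') = N * (x - x') - N * (z₁ - z') by
      rw [hNz]; abel]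
    simp only [Matrix.mul_sub]
    abel
  have hz₁Δ : iprod (z₁ - z) (N * (z₁ - z')) =
      iprod (z₁ - z) (N * (x - x')) - iprod (z₁ - z) (G - G') - iprod (z₁ - z) (d₁ - d') := by
    rw [hNz, iprod_sub_right, iprod_sub_right]
  have hd₁Δ : iprod (d₁ - d') (x - z + z₁) =
      iprod (d₁ - d') (x - x') + iprod (d₁ - d') (z₁ - z) := by
    rw [show x - z + z₁ = (x - x') + (z₁ - z) + x' by abel, iprod_add_right, iprod_add_right,
      hx'orth, add_zero]
  have hxΔ := congrArg (iprod (x - x')) hres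
  rw [iprod_add_right, iprod_add_right, iprod_neg_right,
    iprod_comm (x - x') (N * (z - x) - N * (z' - x'))] at hxΔ
  have hG : iprod (G - G') (z - z₁) = -iprod (G - G') (z₁ - z) := by
    rw [← neg_sub z₁ z, iprod_neg_right]
  linarith [iprod_mul_comm_of_transpose_eq hN (x - x') (z₁ - z), iprod_comm (x - x') (d₁ - d'),
    iprod_comm (z₁ - z) (d₁ - d'), iprod_comm (z₁ - z) (G - G')]

end NIDS

theorem nids_fundamental_inequality_general
    {n p : ℕ}
    (W : Matrix (Fin n) (Fin n) ℝ) (hW : IsMixing W)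
    (α : Fin n → ℝ) (hα : ∀ i, 0 < α i) (c : ℝ) (hc : 0 < c)
    (B : Matrix (Fin n) (Fin n) ℝ) (hB : IsMoorePenrose (1 - W) B)
    (g : Fin n → EuclideanSpace ℝ (Fin p) → EuclideanSpace ℝ (Fin p))
    (r : Fin n → (Fin p → ℝ) → ℝ) (hr : ∀ i, ConvexOn ℝ Set.univ (r i))
    (dk zk xk dk1 zk1 : Matrix (Fin n) (Fin p) ℝ)
    (hxk : ProxMin r α zk xk)
    (hdu : dk1 = dk + c • ((1 - W) *
      ((2 : ℝ) • xk - zk - Matrix.diagonal α * gradS g xk - Matrix.diagonal α * dk)))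
    (hzu : zk1 = xk - Matrix.diagonal α * gradS g xk - Matrix.diagonal α * dk1)
    (hdk : InRange (1 - W) dk)
    (dstar zstar xstar : Matrix (Fin n) (Fin p) ℝ)
    (hxstar : ProxMin r α zstar xstar)
    (hfix1 : dstar = dstar + c • ((1 - W) * ((2 : ℝ) • xstar - zstar -
      Matrix.diagonal α * gradS g xstar - Matrix.diagonal α * dstar)))
    (hfix2 : zstar = xstar - Matrix.diagonal α * gradS g xstar - Matrix.diagonal α * dstar)
    (hdstar : InRange (1 - W) dstar) :
    nsq (Matrix.diagonal fun i => (α i)⁻¹) (zk1 - zstar) +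
        nsq (c⁻¹ • B - Matrix.diagonal α) (dk1 - dstar) ≤
      nsq (Matrix.diagonal fun i => (α i)⁻¹) (zk - zstar) +
        nsq (c⁻¹ • B - Matrix.diagonal α) (dk - dstar) -
        nsq (Matrix.diagonal fun i => (α i)⁻¹) (zk - zk1) -
        nsq (c⁻¹ • B - Matrix.diagonal α) (dk - dk1) +
        2 * iprod (gradS g xk - gradS g xstar) (zk - zk1) -
        2 * iprod (xk - xstar) (gradS g xk - gradS g xstar) := by
  have hA : (1 - W)ᵀ = 1 - W := by rw [transpose_sub, transpose_one, hW.1]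
  have hNL : (Matrix.diagonal fun i => (α i)⁻¹) * Matrix.diagonal α = 1 := by
    rw [diagonal_mul_diagonal, ← diagonal_one]
    exact congrArg diagonal (funext fun i => inv_mul_cancel₀ (hα i).ne')
  exact nsq_add_nsq_le_of_nids_step hc.ne' hA hB.1 (diagonal_transpose _) (diagonal_transpose _)
    hNL hdu hzu hdk hfix1 hfix2 hdstar
    ((hxk.isSubgrad hr).iprod_sub_nonneg (hxstar.isSubgrad hr))

/-- Lemma 3.4: the fundamental inequality of NIDS. -/
theorem nids_fundamental_inequality
    {n p : ℕ}
    (W : Matrix (Fin n) (Fin n) ℝ) (hW : IsMixing W)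
    (α : Fin n → ℝ) (hα : ∀ i, 0 < α i) (c : ℝ) (hc : 0 < c)
    (hcW : ((1 : Matrix (Fin n) (Fin n) ℝ) -
      c • ((Matrix.diagonal fun i => Real.sqrt (α i)) * (1 - W) *
        Matrix.diagonal fun i => Real.sqrt (α i))).PosDef)
    (B : Matrix (Fin n) (Fin n) ℝ) (hB : IsMoorePenrose (1 - W) B)
    (s : Fin n → EuclideanSpace ℝ (Fin p) → ℝ)
    (g : Fin n → EuclideanSpace ℝ (Fin p) → EuclideanSpace ℝ (Fin p))
    (hs : ∀ i, ConvexOn ℝ Set.univ (s i))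
    (hg : ∀ i v, HasGradientAt (s i) (g i v) v)
    (r : Fin n → (Fin p → ℝ) → ℝ) (hr : ∀ i, ConvexOn ℝ Set.univ (r i))
    (dk zk xk dk1 zk1 : Matrix (Fin n) (Fin p) ℝ)
    (hxk : ProxMin r α zk xk)
    (hdu : dk1 = dk + c • ((1 - W) *
      ((2 : ℝ) • xk - zk - Matrix.diagonal α * gradS g xk - Matrix.diagonal α * dk)))
    (hzu : zk1 = xk - Matrix.diagonal α * gradS g xk - Matrix.diagonal α * dk1)
    (hdk : InRange (1 - W) dk)
    (dstar zstar xstar : Matrix (Fin n) (Fin p) ℝ)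
    (hxstar : ProxMin r α zstar xstar)
    (hfix1 : dstar = dstar + c • ((1 - W) * ((2 : ℝ) • xstar - zstar -
      Matrix.diagonal α * gradS g xstar - Matrix.diagonal α * dstar)))
    (hfix2 : zstar = xstar - Matrix.diagonal α * gradS g xstar - Matrix.diagonal α * dstar)
    (hdstar : InRange (1 - W) dstar) :
    nsq (Matrix.diagonal fun i => (α i)⁻¹) (zk1 - zstar) +
        nsq (c⁻¹ • B - Matrix.diagonal α) (dk1 - dstar) ≤
      nsq (Matrix.diagonal fun i => (α i)⁻¹) (zk - zstar) +
        nsq (c⁻¹ • B - Matrix.diagonal α) (dk - dstar) -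
        nsq (Matrix.diagonal fun i => (α i)⁻¹) (zk - zk1) -
        nsq (c⁻¹ • B - Matrix.diagonal α) (dk - dk1) +
        2 * iprod (gradS g xk - gradS g xstar) (zk - zk1) -
        2 * iprod (xk - xstar) (gradS g xk - gradS g xstar) :=
  nids_fundamental_inequality_general W hW α hα c hc B hB g r hr dk zk xk dk1 zk1 hxk hdu hzu hdk
    dstar zstar xstar hxstar hfix1 hfix2 hdstar
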